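/- arXiv:math/0509218 — 3 statements merged into one kernel-verified Lean document; each statement's English description precedes it below -/
import Mathlib

section
/- Let 1 < α < 2. There exists a constant c > 0, depending only on α, such that for all ξ₁, ξ₂ ∈ ℝ with ξ = ξ₁ + ξ₂, the resonance function h(ξ₁,ξ₂,ξ) = ξ|ξ|^{α} − ξ₁|ξ₁|^{α} − ξ₂|ξ₂|^{α} satisfies |h(ξ₁,ξ₂,ξ)| ≥ c |ξ_min| |ξ_max|^{α}, where |ξ_min| = min{|ξ₁|, |ξ₂|, |ξ|} and |ξ_max| = max{|ξ₁|, |ξ₂|, |ξ|}. -/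
/-!
STATEMENT 7: Resonance estimate (Lemma 4.3): for `1 < α < 2` and `ξ = ξ₁ + ξ₂`,
`|ξ|ξ|^α - ξ₁|ξ₁|^α - ξ₂|ξ₂|^α| ≥ c |ξ_min| |ξ_max|^α` with
`|ξ_min| = min{|ξ₁|,|ξ₂|,|ξ|}` and `|ξ_max| = max{|ξ₁|,|ξ₂|,|ξ|}`.
-/

lemma res_superadd (α x y : ℝ) (hα : 1 ≤ α) (hx : 0 ≤ x) (hy : 0 ≤ y) :
    x ^ α + y ^ α ≤ (x + y) ^ α := by
  have h := NNReal.add_rpow_le_rpow_add x.toNNReal y.toNNReal hα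
  have h2 := (NNReal.coe_le_coe).2 h
  rw [NNReal.coe_add, NNReal.coe_rpow, NNReal.coe_rpow, NNReal.coe_rpow, NNReal.coe_add,
    Real.coe_toNNReal x hx, Real.coe_toNNReal y hy] at h2
  exact h2

lemma res_aux (α : ℝ) (hα : 1 < α) (hα' : α < 2) (x y : ℝ) (hy : 0 ≤ y) (hyx : y ≤ x) :
    1/4 * y * (x + y) ^ α ≤ (x + y) * (x + y) ^ α - x * x ^ α - y * y ^ α := by
  have hx : 0 ≤ x := hy.trans hyx
  have h1 : x ^ α + y ^ α ≤ (x + y) ^ α := res_superadd α x y hα.le hx hy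
  have h2 : (x + y) * (x ^ α + y ^ α) ≤ (x + y) * (x + y) ^ α :=
    mul_le_mul_of_nonneg_left h1 (by linarith)
  have h3 : x * y ^ α + y * x ^ α ≤ (x + y) * (x + y) ^ α - x * x ^ α - y * y ^ α := by
    nlinarith [h2]
  have h4 : (x + y) ^ α ≤ 4 * x ^ α := by
    have ha : (x + y) ^ α ≤ (2 * x) ^ α :=
      Real.rpow_le_rpow (by linarith) (by linarith) (by linarith)
    have hb : ((2:ℝ) * x) ^ α = 2 ^ α * x ^ α := Real.mul_rpow (by norm_num) hx
    have hc : (2:ℝ) ^ α ≤ 2 ^ (2:ℝ) := Real.rpow_le_rpow_of_exponent_le one_le_two hα'.le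
    have hd : (2:ℝ) ^ (2:ℝ) = 4 := by norm_num
    have hxα : 0 ≤ x ^ α := Real.rpow_nonneg hx α
    nlinarith [ha, hb, hc, hd, hxα]
  have h5 : 0 ≤ x * y ^ α := mul_nonneg hx (Real.rpow_nonneg hy α)
  nlinarith [h3, h4, h5]

lemma res_core (α : ℝ) (hα : 1 < α) (hα' : α < 2) (x y : ℝ) (hx : 0 ≤ x) (hy : 0 ≤ y) :
    1/4 * min (min x y) (x + y) * (max (max x y) (x + y)) ^ α ≤
      (x + y) * (x + y) ^ α - x * x ^ α - y * y ^ α := by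
  have hmin : min (min x y) (x + y) = min x y :=
    min_eq_left (le_trans (min_le_left x y) (le_add_of_nonneg_right hy))
  have hmax : max (max x y) (x + y) = x + y :=
    max_eq_right (max_le (le_add_of_nonneg_right hy) (le_add_of_nonneg_left hx))
  rw [hmin, hmax]
  rcases le_total y x with hyx | hxy
  · rw [min_eq_right hyx]
    exact res_aux α hα hα' x y hy hyx
  · rw [min_eq_left hxy]
    have := res_aux α hα hα' y x hx hxy
    rw [show y + x = x + y from by ring] at this
    linarith

theorem resonance_estimate (α : ℝ) (hα : 1 < α) (hα' : α < 2) :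
    ∃ c : ℝ, 0 < c ∧ ∀ ξ₁ ξ₂ : ℝ,
      c * min (min |ξ₁| |ξ₂|) |ξ₁ + ξ₂| * (max (max |ξ₁| |ξ₂|) |ξ₁ + ξ₂|) ^ α ≤
        |(ξ₁ + ξ₂) * |ξ₁ + ξ₂| ^ α - ξ₁ * |ξ₁| ^ α - ξ₂ * |ξ₂| ^ α| := by
  refine ⟨1/4, by norm_num, fun ξ₁ ξ₂ => ?_⟩
  rcases le_total 0 ξ₁ with h1 | h1 <;> rcases le_total 0 ξ₂ with h2 | h2
  · -- both nonneg
    have hs : 0 ≤ ξ₁ + ξ₂ := by linarith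
    rw [abs_of_nonneg h1, abs_of_nonneg h2, abs_of_nonneg hs]
    exact le_trans (res_core α hα hα' ξ₁ ξ₂ h1 h2) (le_abs_self _)
  · -- ξ₁ ≥ 0, ξ₂ ≤ 0
    rcases le_total 0 (ξ₁ + ξ₂) with hs | hs
    · rw [abs_of_nonneg h1, abs_of_nonpos h2, abs_of_nonneg hs]
      have hc := res_core α hα hα' (ξ₁ + ξ₂) (-ξ₂) hs (by linarith)
      rw [show ξ₁ + ξ₂ + -ξ₂ = ξ₁ from by ring] at hc
      have hm : min (min (ξ₁ + ξ₂) (-ξ₂)) ξ₁ = min (min ξ₁ (-ξ₂)) (ξ₁ + ξ₂) := by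
        simp [min_comm, min_left_comm, min_assoc]
      have hM : max (max (ξ₁ + ξ₂) (-ξ₂)) ξ₁ = max (max ξ₁ (-ξ₂)) (ξ₁ + ξ₂) := by
        simp [max_comm, max_left_comm, max_assoc]
      rw [hm, hM] at hc
      have hb := neg_le_abs ((ξ₁ + ξ₂) * (ξ₁ + ξ₂) ^ α - ξ₁ * ξ₁ ^ α - ξ₂ * (-ξ₂) ^ α)
      nlinarith [hc, hb]
    · rw [abs_of_nonneg h1, abs_of_nonpos h2, abs_of_nonpos hs]
      have hc := res_core α hα hα' (-(ξ₁ + ξ₂)) ξ₁ (by linarith) h1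
      rw [show -(ξ₁ + ξ₂) + ξ₁ = -ξ₂ from by ring] at hc
      have hm : min (min (-(ξ₁ + ξ₂)) ξ₁) (-ξ₂) = min (min ξ₁ (-ξ₂)) (-(ξ₁ + ξ₂)) := by
        simp [min_comm, min_left_comm, min_assoc]
      have hM : max (max (-(ξ₁ + ξ₂)) ξ₁) (-ξ₂) = max (max ξ₁ (-ξ₂)) (-(ξ₁ + ξ₂)) := by
        simp [max_comm, max_left_comm, max_assoc]
      rw [hm, hM] at hc
      have hb := le_abs_self ((ξ₁ + ξ₂) * (-(ξ₁ + ξ₂)) ^ α - ξ₁ * ξ₁ ^ α - ξ₂ * (-ξ₂) ^ α)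
      nlinarith [hc, hb]
  · -- ξ₁ ≤ 0, ξ₂ ≥ 0
    rcases le_total 0 (ξ₁ + ξ₂) with hs | hs
    · rw [abs_of_nonpos h1, abs_of_nonneg h2, abs_of_nonneg hs]
      have hc := res_core α hα hα' (ξ₁ + ξ₂) (-ξ₁) hs (by linarith)
      rw [show ξ₁ + ξ₂ + -ξ₁ = ξ₂ from by ring] at hc
      have hm : min (min (ξ₁ + ξ₂) (-ξ₁)) ξ₂ = min (min (-ξ₁) ξ₂) (ξ₁ + ξ₂) := by
        simp [min_comm, min_left_comm, min_assoc]
      have hM : max (max (ξ₁ + ξ₂) (-ξ₁)) ξ₂ = max (max (-ξ₁) ξ₂) (ξ₁ + ξ₂) := by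
        simp [max_comm, max_left_comm, max_assoc]
      rw [hm, hM] at hc
      have hb := neg_le_abs ((ξ₁ + ξ₂) * (ξ₁ + ξ₂) ^ α - ξ₁ * (-ξ₁) ^ α - ξ₂ * ξ₂ ^ α)
      nlinarith [hc, hb]
    · rw [abs_of_nonpos h1, abs_of_nonneg h2, abs_of_nonpos hs]
      have hc := res_core α hα hα' (-(ξ₁ + ξ₂)) ξ₂ (by linarith) h2
      rw [show -(ξ₁ + ξ₂) + ξ₂ = -ξ₁ from by ring] at hc
      have hm : min (min (-(ξ₁ + ξ₂)) ξ₂) (-ξ₁) = min (min (-ξ₁) ξ₂) (-(ξ₁ + ξ₂)) := by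
        simp [min_comm, min_left_comm, min_assoc]
      have hM : max (max (-(ξ₁ + ξ₂)) ξ₂) (-ξ₁) = max (max (-ξ₁) ξ₂) (-(ξ₁ + ξ₂)) := by
        simp [max_comm, max_left_comm, max_assoc]
      rw [hm, hM] at hc
      have hb := le_abs_self ((ξ₁ + ξ₂) * (-(ξ₁ + ξ₂)) ^ α - ξ₁ * (-ξ₁) ^ α - ξ₂ * ξ₂ ^ α)
      nlinarith [hc, hb]
  · -- both nonpos
    have hs : ξ₁ + ξ₂ ≤ 0 := by linarith
    rw [abs_of_nonpos h1, abs_of_nonpos h2, abs_of_nonpos hs]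
    have hc := res_core α hα hα' (-ξ₁) (-ξ₂) (by linarith) (by linarith)
    rw [show -ξ₁ + -ξ₂ = -(ξ₁ + ξ₂) from by ring] at hc
    have hb := neg_le_abs ((ξ₁ + ξ₂) * (-(ξ₁ + ξ₂)) ^ α - ξ₁ * (-ξ₁) ^ α - ξ₂ * (-ξ₂) ^ α)
    nlinarith [hc, hb]
end

section
/- Let 1 < α < 2. There exists a constant c > 0, depending only on α, such that for all τ₁, τ₂, ξ₁, ξ₂ ∈ ℝ, setting τ = τ₁ + τ₂, ξ = ξ₁ + ξ₂, λ = τ − ξ|ξ|^{α}, λ₁ = τ₁ − ξ₁|ξ₁|^{α}, λ₂ = τ₂ − ξ₂|ξ₂|^{α}, one has max{|λ|, |λ₁|, |λ₂|} ≥ c |ξ_min| |ξ_max|^{α}, where |ξ_min| = min{|ξ₁|, |ξ₂|, |ξ|} and |ξ_max| = max{|ξ₁|, |ξ₂|, |ξ|}. (This follows since λ − λ₁ − λ₂ = −(ξ|ξ|^{α} − ξ₁|ξ₁|^{α} − ξ₂|ξ₂|^{α}).) -/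
/-!
STATEMENT 8: On the convolution set `τ = τ₁ + τ₂`, `ξ = ξ₁ + ξ₂`, the modulations
`λ = τ - ξ|ξ|^α`, `λᵢ = τᵢ - ξᵢ|ξᵢ|^α` satisfy
`max{|λ|,|λ₁|,|λ₂|} ≥ c |ξ_min| |ξ_max|^α` for `1 < α < 2`.
-/

/-- Bernoulli step: for `0 ≤ a`, `0 < b`, `b^{α+1} + (α+1) a b^α ≤ (a+b)^{α+1}`. -/
lemma bern_step (α : ℝ) (hα : 1 < α) (a b : ℝ) (ha : 0 ≤ a) (hb : 0 < b) :
    b * b ^ α + (α + 1) * a * b ^ α ≤ (a + b) * (a + b) ^ α := by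
  have hs : (-1 : ℝ) ≤ a / b := le_trans (by norm_num) (div_nonneg ha hb.le)
  have hp : (1 : ℝ) ≤ α + 1 := by linarith
  have h1 : 1 + (α + 1) * (a / b) ≤ (1 + a / b) ^ (α + 1) :=
    one_add_mul_self_le_rpow_one_add hs hp
  have hb1 : (0:ℝ) ≤ 1 + a / b := by positivity
  have h2 : ((1 + a / b) * b) ^ (α + 1) = (1 + a / b) ^ (α + 1) * b ^ (α + 1) :=
    Real.mul_rpow hb1 hb.le
  have h3 : (1 + a / b) * b = a + b := by field_simp; ring
  have hab : (0 : ℝ) < a + b := by linarith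
  have h4 : (a + b) ^ (α + 1) = (a + b) ^ α * (a + b) := Real.rpow_add_one hab.ne' α
  have h5 : b ^ (α + 1) = b ^ α * b := Real.rpow_add_one hb.ne' α
  have := mul_le_mul_of_nonneg_right h1 (le_of_lt (Real.rpow_pos_of_pos hb (α + 1)))
  rw [← h2, h3, h4, h5] at this
  have hdiv : a / b * b = a := div_mul_cancel₀ a hb.ne'
  have hexp : (1 + (α + 1) * (a / b)) * (b ^ α * b) = b * b ^ α + (α + 1) * a * b ^ α := by
    field_simp
  nlinarith [this, hexp]

/-- Key resonance estimate on nonnegatives with `a ≤ b`. -/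
lemma key_est (α : ℝ) (hα : 1 < α) (hα' : α < 2) (a b : ℝ) (ha : 0 ≤ a) (hab : a ≤ b) :
    (1/4) * (a * (a + b) ^ α) ≤ (a + b) * (a + b) ^ α - a * a ^ α - b * b ^ α := by
  have hb : 0 ≤ b := le_trans ha hab
  rcases eq_or_lt_of_le hb with hb0 | hb0
  · have ha0 : a = 0 := le_antisymm (hb0 ▸ hab) ha
    simp [ha0, ← hb0]
  have h1 := bern_step α hα a b ha hb0
  have h2 : a * a ^ α ≤ a * b ^ α :=
    mul_le_mul_of_nonneg_left (Real.rpow_le_rpow ha hab (by linarith)) ha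
  -- (a+b)^α ≤ 4 * b^α
  have h3 : (a + b) ^ α ≤ (2 * b) ^ α := Real.rpow_le_rpow (by linarith) (by linarith) (by linarith)
  have h4 : (2 * b) ^ α = 2 ^ α * b ^ α := Real.mul_rpow (by norm_num) hb
  have h5 : (2 : ℝ) ^ α ≤ 2 ^ (2 : ℝ) :=
    Real.rpow_le_rpow_of_exponent_le (by norm_num) hα'.le
  have h6 : (2 : ℝ) ^ (2 : ℝ) = 4 := by
    rw [show (2:ℝ) = ((2:ℕ):ℝ) by norm_num, Real.rpow_natCast]; norm_num
  have hbα : 0 < b ^ α := Real.rpow_pos_of_pos hb0 α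
  nlinarith [mul_le_mul_of_nonneg_left h3 ha, mul_nonneg ha hbα.le]

/-- Symmetric version with `|·|` on the RHS. -/
lemma key_est' (α : ℝ) (hα : 1 < α) (hα' : α < 2) (u v : ℝ) (hu : 0 ≤ u) (hv : 0 ≤ v) :
    (1/4) * (min u v * (u + v) ^ α) ≤ |(u + v) * (u + v) ^ α - u * u ^ α - v * v ^ α| := by
  refine le_trans ?_ (le_abs_self _)
  rcases le_total u v with h | h
  · rw [min_eq_left h]; exact key_est α hα hα' u v hu h
  · rw [min_eq_right h]
    have := key_est α hα hα' v u hv h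
    calc (1/4) * (v * (u + v) ^ α) = (1/4) * (v * (v + u) ^ α) := by rw [add_comm]
      _ ≤ (v + u) * (v + u) ^ α - v * v ^ α - u * u ^ α := this
      _ = (u + v) * (u + v) ^ α - u * u ^ α - v * v ^ α := by rw [add_comm v u]; ring

/-- Full resonance estimate. -/
lemma resonance (α : ℝ) (hα : 1 < α) (hα' : α < 2) (x y : ℝ) :
    (1/4) * (min (min |x| |y|) |x + y| * (max (max |x| |y|) |x + y|) ^ α) ≤
      |(x + y) * |x + y| ^ α - x * |x| ^ α - y * |y| ^ α| := by
  rcases le_total 0 x with hx | hx <;> rcases le_total 0 y with hy | hy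
  · -- both nonneg
    rw [abs_of_nonneg hx, abs_of_nonneg hy, abs_of_nonneg (by linarith : (0:ℝ) ≤ x + y)]
    have hmin : min (min x y) (x + y) = min x y := by
      simp only [min_def]; split_ifs <;> linarith
    have hmax : max (max x y) (x + y) = x + y := by
      simp only [max_def]; split_ifs <;> linarith
    rw [hmin, hmax]
    exact key_est' α hα hα' x y hx hy
  · -- x ≥ 0, y ≤ 0
    rcases le_total 0 (x + y) with hs | hs
    · -- u = x+y, v = -y, u+v = x
      rw [abs_of_nonneg hx, abs_of_nonpos hy, abs_of_nonneg hs]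
      have hmin : min (min x (-y)) (x + y) = min (x + y) (-y) := by
        simp only [min_def]; split_ifs <;> linarith
      have hmax : max (max x (-y)) (x + y) = (x + y) + -y := by
        simp only [max_def]; split_ifs <;> linarith
      rw [hmin, hmax]
      have h := key_est' α hα hα' (x + y) (-y) hs (by linarith)
      have he : |((x+y) + -y) * ((x+y) + -y) ^ α - (x+y) * (x+y) ^ α - (-y) * (-y) ^ α|
          = |(x + y) * (x + y) ^ α - x * x ^ α - y * (-y) ^ α| := by
        rw [show ((x+y) + -y) = x by ring, ← abs_neg]; ring_nf
      rw [he] at h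
      calc 1/4 * (min (x+y) (-y) * ((x+y) + -y) ^ α)
          = 1/4 * (min (x+y) (-y) * ((x + y) + -y) ^ α) := rfl
        _ ≤ _ := h
    · -- u = -(x+y), v = x, u+v = -y
      rw [abs_of_nonneg hx, abs_of_nonpos hy, abs_of_nonpos hs]
      have hmin : min (min x (-y)) (-(x + y)) = min (-(x + y)) x := by
        simp only [min_def]; split_ifs <;> linarith
      have hmax : max (max x (-y)) (-(x + y)) = -(x + y) + x := by
        simp only [max_def]; split_ifs <;> linarith
      rw [hmin, hmax]
      have h := key_est' α hα hα' (-(x + y)) x (by linarith) hx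
      have he : |(-(x+y) + x) * (-(x+y) + x) ^ α - (-(x+y)) * (-(x+y)) ^ α - x * x ^ α|
          = |(x + y) * (-(x + y)) ^ α - x * x ^ α - y * (-y) ^ α| := by
        rw [show (-(x+y) + x) = -y by ring]; ring_nf
      rw [he] at h
      exact h
  · -- x ≤ 0, y ≥ 0
    rcases le_total 0 (x + y) with hs | hs
    · -- u = x+y, v = -x, u+v = y
      rw [abs_of_nonpos hx, abs_of_nonneg hy, abs_of_nonneg hs]
      have hmin : min (min (-x) y) (x + y) = min (x + y) (-x) := by
        simp only [min_def]; split_ifs <;> linarith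
      have hmax : max (max (-x) y) (x + y) = (x + y) + -x := by
        simp only [max_def]; split_ifs <;> linarith
      rw [hmin, hmax]
      have h := key_est' α hα hα' (x + y) (-x) hs (by linarith)
      have he : |((x+y) + -x) * ((x+y) + -x) ^ α - (x+y) * (x+y) ^ α - (-x) * (-x) ^ α|
          = |(x + y) * (x + y) ^ α - x * (-x) ^ α - y * y ^ α| := by
        rw [show ((x+y) + -x) = y by ring, ← abs_neg]; ring_nf
      rw [he] at h
      exact h
    · -- u = -(x+y), v = y, u+v = -x
      rw [abs_of_nonpos hx, abs_of_nonneg hy, abs_of_nonpos hs]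
      have hmin : min (min (-x) y) (-(x + y)) = min (-(x + y)) y := by
        simp only [min_def]; split_ifs <;> linarith
      have hmax : max (max (-x) y) (-(x + y)) = -(x + y) + y := by
        simp only [max_def]; split_ifs <;> linarith
      rw [hmin, hmax]
      have h := key_est' α hα hα' (-(x + y)) y (by linarith) hy
      have he : |(-(x+y) + y) * (-(x+y) + y) ^ α - (-(x+y)) * (-(x+y)) ^ α - y * y ^ α|
          = |(x + y) * (-(x + y)) ^ α - x * (-x) ^ α - y * y ^ α| := by
        rw [show (-(x+y) + y) = -x by ring]; ring_nf
      rw [he] at h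
      exact h
  · -- both nonpos: u = -x, v = -y
    rw [abs_of_nonpos hx, abs_of_nonpos hy, abs_of_nonpos (by linarith : x + y ≤ 0)]
    have hmin : min (min (-x) (-y)) (-(x + y)) = min (-x) (-y) := by
      simp only [min_def]; split_ifs <;> linarith
    have hmax : max (max (-x) (-y)) (-(x + y)) = -x + -y := by
      simp only [max_def]; split_ifs <;> linarith
    rw [hmin, hmax]
    have h := key_est' α hα hα' (-x) (-y) (by linarith) (by linarith)
    have he : |(-x + -y) * (-x + -y) ^ α - (-x) * (-x) ^ α - (-y) * (-y) ^ α|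
        = |(x + y) * (-(x + y)) ^ α - x * (-x) ^ α - y * (-y) ^ α| := by
      rw [show (-x + -y) = -(x+y) by ring, ← abs_neg]; ring_nf
    rw [he] at h
    exact h

theorem max_modulation_lower_bound (α : ℝ) (hα : 1 < α) (hα' : α < 2) :
    ∃ c : ℝ, 0 < c ∧ ∀ τ₁ τ₂ ξ₁ ξ₂ : ℝ,
      c * min (min |ξ₁| |ξ₂|) |ξ₁ + ξ₂| * (max (max |ξ₁| |ξ₂|) |ξ₁ + ξ₂|) ^ α ≤
        max (max |(τ₁ + τ₂) - (ξ₁ + ξ₂) * |ξ₁ + ξ₂| ^ α|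
                 |τ₁ - ξ₁ * |ξ₁| ^ α|)
            |τ₂ - ξ₂ * |ξ₂| ^ α| := by
  refine ⟨1/12, by norm_num, fun τ₁ τ₂ ξ₁ ξ₂ => ?_⟩
  have hres := resonance α hα hα' ξ₁ ξ₂
  set lam := (τ₁ + τ₂) - (ξ₁ + ξ₂) * |ξ₁ + ξ₂| ^ α with hlam
  set lam1 := τ₁ - ξ₁ * |ξ₁| ^ α with hlam1
  set lam2 := τ₂ - ξ₂ * |ξ₂| ^ α with hlam2
  have heq : (ξ₁ + ξ₂) * |ξ₁ + ξ₂| ^ α - ξ₁ * |ξ₁| ^ α - ξ₂ * |ξ₂| ^ α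
      = lam1 + lam2 - lam := by rw [hlam, hlam1, hlam2]; ring
  rw [heq] at hres
  have h1 : |lam1 + lam2 - lam| ≤ |lam1| + |lam2| + |lam| := by
    calc |lam1 + lam2 - lam| ≤ |lam1 + lam2| + |lam| := abs_sub _ _
      _ ≤ |lam1| + |lam2| + |lam| := by linarith [abs_add_le lam1 lam2]
  have M1 : |lam| ≤ max (max |lam| |lam1|) |lam2| := le_max_of_le_left (le_max_left _ _)
  have M2 : |lam1| ≤ max (max |lam| |lam1|) |lam2| := le_max_of_le_left (le_max_right _ _)
  have M3 : |lam2| ≤ max (max |lam| |lam1|) |lam2| := le_max_right _ _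
  linarith
end

section
/- Let 1 < α < 2. For every ξ₂ ∈ ℝ and every β ∈ [−1, −1/4], setting ξ₁ = βξ₂ and ξ = ξ₁ + ξ₂, one has | |ξ₁|^{α} − |ξ₂|^{α} |^{1/2} ≥ (1/2) |ξ|^{1/2} |ξ₂|^{(α−1)/2}. -/
/-!
STATEMENT 10: Elementary smoothing estimate (inequality (5.1) of the paper): for
`1 < α < 2`, `ξ₂ ∈ ℝ`, `β ∈ [-1,-1/4]`, `ξ₁ = βξ₂`, `ξ = ξ₁+ξ₂`, one has
`||ξ₁|^α - |ξ₂|^α|^{1/2} ≥ (1/2)|ξ|^{1/2}|ξ₂|^{(α-1)/2}`.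
-/

theorem smoothing_estimate (α : ℝ) (hα : 1 < α) (hα' : α < 2)
    (ξ₂ β : ℝ) (hβ : β ∈ Set.Icc (-1 : ℝ) (-(1/4))) :
    (1 / 2 : ℝ) * |β * ξ₂ + ξ₂| ^ ((1 : ℝ) / 2) * |ξ₂| ^ ((α - 1) / 2) ≤
      (|(|β * ξ₂| ^ α) - (|ξ₂| ^ α)|) ^ ((1 : ℝ) / 2) := by
  obtain ⟨hb1, hb2⟩ := hβ
  set b : ℝ := -β with hb
  have hb14 : (1/4:ℝ) ≤ b := by rw [hb]; linarith
  have hble : b ≤ 1 := by rw [hb]; linarith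
  have hb0 : (0:ℝ) ≤ b := by linarith
  have hbpos : (0:ℝ) < b := by linarith
  have hx : (0:ℝ) ≤ |ξ₂| := abs_nonneg _
  have hA : |β * ξ₂ + ξ₂| = (1 - b) * |ξ₂| := by
    rw [show β * ξ₂ + ξ₂ = (1 - b) * ξ₂ by rw [hb]; ring, abs_mul,
      abs_of_nonneg (by linarith : (0:ℝ) ≤ 1 - b)]
  have hB : |β * ξ₂| = b * |ξ₂| := by
    rw [abs_mul, abs_of_nonpos (by linarith : β ≤ 0), hb]
  have hbα : b ^ α ≤ b := by
    calc b ^ α ≤ b ^ (1:ℝ) :=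
          Real.rpow_le_rpow_of_exponent_ge hbpos hble hα.le
      _ = b := Real.rpow_one b
  have hbα0 : 0 ≤ b ^ α := Real.rpow_nonneg hb0 α
  have hXα : (0:ℝ) ≤ |ξ₂| ^ α := Real.rpow_nonneg hx α
  have hC : |(|β * ξ₂| ^ α) - (|ξ₂| ^ α)| = (1 - b ^ α) * |ξ₂| ^ α := by
    rw [hB, Real.mul_rpow hb0 hx, abs_of_nonpos, neg_sub]
    · ring
    · nlinarith
  rw [hA, hC, Real.mul_rpow (by linarith : (0:ℝ) ≤ 1 - b) hx,
    Real.mul_rpow (by linarith : (0:ℝ) ≤ 1 - b ^ α) hXα]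
  have hpow : |ξ₂| ^ ((1:ℝ)/2) * |ξ₂| ^ ((α - 1)/2) = |ξ₂| ^ (α/2) := by
    rw [← Real.rpow_add' hx (by ring_nf; positivity)]
    ring_nf
  have hpow2 : (|ξ₂| ^ α) ^ ((1:ℝ)/2) = |ξ₂| ^ (α/2) := by
    rw [← Real.rpow_mul hx]; ring_nf
  calc (1/2:ℝ) * ((1 - b) ^ ((1:ℝ)/2) * |ξ₂| ^ ((1:ℝ)/2)) * |ξ₂| ^ ((α - 1)/2)
      = ((1/2:ℝ) * (1 - b) ^ ((1:ℝ)/2)) * (|ξ₂| ^ (α/2)) := by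
        rw [← hpow]; ring
    _ ≤ (1 - b ^ α) ^ ((1:ℝ)/2) * (|ξ₂| ^ (α/2)) := by
        apply mul_le_mul_of_nonneg_right _ (Real.rpow_nonneg hx _)
        have h14 : ((1:ℝ)/4) ^ ((1:ℝ)/2) = 1/2 := by
          rw [show (1/4:ℝ) = (1/2:ℝ)^(2:ℕ) by norm_num,
            ← Real.rpow_natCast ((1:ℝ)/2) 2, ← Real.rpow_mul (by norm_num)]
          norm_num
        calc (1/2:ℝ) * (1 - b) ^ ((1:ℝ)/2)
            = ((1/4) * (1 - b)) ^ ((1:ℝ)/2) := by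
              rw [Real.mul_rpow (by norm_num) (by linarith : (0:ℝ) ≤ 1 - b), h14]
          _ ≤ (1 - b ^ α) ^ ((1:ℝ)/2) :=
              Real.rpow_le_rpow (by nlinarith) (by nlinarith) (by norm_num)
    _ = (1 - b ^ α) ^ ((1:ℝ)/2) * (|ξ₂| ^ α) ^ ((1:ℝ)/2) := by rw [hpow2]
end
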